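/- arXiv:2012.00473 — 3 statements merged into one kernel-verified Lean document; each statement's English description precedes it below -/
import Mathlib

section
/- Let C be a finite type with a free additive action of ℤ/3ℤ, let Q be the quotient of C by the orbit equivalence relation, with quotient map π : C → Q, and for c, c' in the same orbit let sh(c,c') be the unique k ∈ ℤ/3ℤ with k +ᵥ c = c'. Let f : C ≃ C be an equivariant permutation (f(k +ᵥ c) = k +ᵥ f(c) for all k, c), and let f̄ : Q ≃ Q be the induced permutation of the quotient. Then for any two sections φ, φ' : Q → C of π (i.e. π ∘ φ = id and π ∘ φ' = id), one has ∑_{v ∈ Q} sh(f(φ(v)), φ(f̄(v))) = ∑_{v ∈ Q} sh(f(φ'(v)), φ'(f̄(v))) in ℤ/3ℤ. (In particular the common value, denoted sh(f), is well defined.) -/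
/-!
Under a free action, `sh c (k +ᵥ c) = k`, so writing `φ' q = a q +ᵥ φ q`, the shift at `q`
computed with `φ'` differs from the one computed with `φ` by `a (f̄ q) - a q` (here the
equivariance of `f` is used). These differences telescope: as `f̄` permutes the orbits,
`∑ q, a (f̄ q) = ∑ q, a q`.
-/

open scoped Classical

/-- The shift `sh c c'`: the (under a free action, unique) element `k : ZMod 3`
with `k +ᵥ c = c'`, when `c` and `c'` lie in the same orbit; junk value `0`
otherwise. -/
noncomputable def sh {C : Type*} [AddAction (ZMod 3) C] (c c' : C) : ZMod 3 :=
  if h : ∃ k : ZMod 3, k +ᵥ c = c' then h.choose else 0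

section Shift

variable {C : Type*} [AddAction (ZMod 3) C]

theorem sh_vadd_right (hfree : ∀ (k : ZMod 3) (c : C), k +ᵥ c = c → k = 0)
    (k : ZMod 3) (c : C) : sh c (k +ᵥ c) = k := by
  have hex : ∃ l : ZMod 3, l +ᵥ c = k +ᵥ c := ⟨k, rfl⟩
  rw [sh, dif_pos hex]
  refine sub_eq_zero.mp (hfree _ (k +ᵥ c) ?_)
  rw [← add_vadd, sub_add_cancel, hex.choose_spec]

theorem sh_apply_add_sh_eq_sh_add_sh_apply
    (hfree : ∀ (k : ZMod 3) (c : C), k +ᵥ c = c → k = 0)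
    {f : C → C} (hf : ∀ (k : ZMod 3) (c : C), f (k +ᵥ c) = k +ᵥ f c) {c c' d d' : C}
    (hc : c' ∈ AddAction.orbit (ZMod 3) c) (hd : d' ∈ AddAction.orbit (ZMod 3) d)
    (hcd : d ∈ AddAction.orbit (ZMod 3) (f c)) :
    sh (f c) d + sh d d' = sh c c' + sh (f c') d' := by
  rw [AddAction.mem_orbit_iff] at hc hd hcd
  obtain ⟨a, rfl⟩ := hc
  obtain ⟨b, rfl⟩ := hcd
  obtain ⟨e, rfl⟩ := hd
  have hd'_eq : e +ᵥ b +ᵥ f c = (e + b - a) +ᵥ f (a +ᵥ c) := by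
    rw [hf, ← add_vadd, ← add_vadd, sub_add_cancel]
  rw [sh_vadd_right hfree, sh_vadd_right hfree, sh_vadd_right hfree, hd'_eq, sh_vadd_right hfree]
  ring

end Shift

/-- Theorem 4.3(ii): for an equivariant permutation `f` of `C` inducing `f̄` on the
orbit space `Q`, the sum `∑ v : Q, sh (f (φ v)) (φ (f̄ v))` does not depend on the
choice of the section `φ` of the quotient map. -/
theorem sum_sh_section_independent {C : Type*} [Finite C] [AddAction (ZMod 3) C]
    (hfree : ∀ (k : ZMod 3) (c : C), k +ᵥ c = c → k = 0)
    (f : Equiv.Perm C)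
    (hf : ∀ (k : ZMod 3) (c : C), f (k +ᵥ c) = k +ᵥ f c)
    (fbar : Equiv.Perm (Quotient (AddAction.orbitRel (ZMod 3) C)))
    (hfbar : ∀ c : C,
      Quotient.mk (AddAction.orbitRel (ZMod 3) C) (f c)
        = fbar (Quotient.mk (AddAction.orbitRel (ZMod 3) C) c))
    (φ φ' : Quotient (AddAction.orbitRel (ZMod 3) C) → C)
    (hφ : ∀ q, Quotient.mk (AddAction.orbitRel (ZMod 3) C) (φ q) = q)
    (hφ' : ∀ q, Quotient.mk (AddAction.orbitRel (ZMod 3) C) (φ' q) = q) :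
    ∑ᶠ q, sh (f (φ q)) (φ (fbar q)) = ∑ᶠ q, sh (f (φ' q)) (φ' (fbar q)) := by
  have : Fintype (Quotient (AddAction.orbitRel (ZMod 3) C)) := Fintype.ofFinite _
  have hmem {c d : C} (h : Quotient.mk (AddAction.orbitRel (ZMod 3) C) c = Quotient.mk _ d) :
      d ∈ AddAction.orbit (ZMod 3) c :=
    AddAction.orbitRel_apply.mp (Quotient.exact h.symm)
  have hcocycle : ∀ q, sh (f (φ q)) (φ (fbar q)) + sh (φ (fbar q)) (φ' (fbar q))
      = sh (φ q) (φ' q) + sh (f (φ' q)) (φ' (fbar q)) := fun q =>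
    sh_apply_add_sh_eq_sh_add_sh_apply hfree hf (hmem (by rw [hφ, hφ']))
      (hmem (by rw [hφ, hφ'])) (hmem (by rw [hφ, hfbar, hφ]))
  have hsum := Finset.sum_congr rfl fun q (_ : q ∈ Finset.univ) => hcocycle q
  rw [Finset.sum_add_distrib, Finset.sum_add_distrib,
    Equiv.sum_comp fbar fun q => sh (φ q) (φ' q), add_comm] at hsum
  rw [finsum_eq_sum_of_fintype, finsum_eq_sum_of_fintype]
  exact add_left_cancel hsum
end

section
/- Let C be a finite type with a free additive action of ℤ/3ℤ, let Q be the quotient of C by the orbit equivalence relation with quotient map π, and for c, c' in the same orbit let sh(c,c') be the unique k ∈ ℤ/3ℤ with k +ᵥ c = c'. For an equivariant permutation f : C ≃ C with induced permutation f̄ of Q, define sh(f) = ∑_{v ∈ Q} sh(f(φ(v)), φ(f̄(v))) for a (any) section φ : Q → C of π. Then for any two equivariant permutations f and g of C, sh(f ∘ g) = sh(f) + sh(g) in ℤ/3ℤ. -/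
open scoped Classical

/-! For a free action, `sh` is additive along chains inside an orbit and invariant under
equivariant maps. Hence, for each vertex `q`, the shift of `f * g` at `q` splits as the shift
of `g` at `q` plus the shift of `f` at `gbar q`, and reindexing the second sum by the
bijection `gbar` gives the result. -/

open AddAction

section Shift

variable {C : Type*} [AddAction (ZMod 3) C]

theorem sh_eq_of_vadd_eq (hfree : ∀ (k : ZMod 3) (c : C), k +ᵥ c = c → k = 0)
    {k : ZMod 3} {c c' : C} (h : k +ᵥ c = c') : sh c c' = k := by
  have hex : ∃ k : ZMod 3, k +ᵥ c = c' := ⟨k, h⟩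
  rw [sh, dif_pos hex]
  have hfix : (-k + hex.choose) +ᵥ c = c := by
    rw [← vadd_vadd, hex.choose_spec, ← h, vadd_vadd, neg_add_cancel, zero_vadd]
  linear_combination (norm := abel) hfree _ _ hfix

theorem sh_add_sh (hfree : ∀ (k : ZMod 3) (c : C), k +ᵥ c = c → k = 0)
    {c c' c'' : C} (h₁ : c' ∈ orbit (ZMod 3) c) (h₂ : c'' ∈ orbit (ZMod 3) c') :
    sh c c' + sh c' c'' = sh c c'' := by
  obtain ⟨k₁, hk₁⟩ := h₁
  obtain ⟨k₂, hk₂⟩ := h₂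
  rw [sh_eq_of_vadd_eq hfree hk₁, sh_eq_of_vadd_eq hfree hk₂,
    sh_eq_of_vadd_eq hfree (k := k₂ + k₁) (by rw [← vadd_vadd, ← hk₂, ← hk₁]), add_comm]

theorem sh_map (hfree : ∀ (k : ZMod 3) (c : C), k +ᵥ c = c → k = 0)
    {f : C → C} (hf : ∀ (k : ZMod 3) (c : C), f (k +ᵥ c) = k +ᵥ f c)
    {c c' : C} (h : c' ∈ orbit (ZMod 3) c) : sh (f c) (f c') = sh c c' := by
  obtain ⟨k, hk⟩ := h
  rw [sh_eq_of_vadd_eq hfree hk, sh_eq_of_vadd_eq hfree (by rw [← hf]; exact congrArg f hk)]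

theorem sh_map_left_eq_add (hfree : ∀ (k : ZMod 3) (c : C), k +ᵥ c = c → k = 0)
    {f : C → C} (hf : ∀ (k : ZMod 3) (c : C), f (k +ᵥ c) = k +ᵥ f c)
    {a b c : C} (hab : b ∈ orbit (ZMod 3) a) (hbc : c ∈ orbit (ZMod 3) (f b)) :
    sh (f a) c = sh a b + sh (f b) c := by
  obtain ⟨k, rfl⟩ := hab
  rw [← sh_map hfree hf ⟨k, rfl⟩, sh_add_sh hfree ⟨k, (hf k a).symm⟩ hbc]

end Shift

theorem mem_orbit_of_mk_eq {G α : Type*} [AddGroup G] [AddAction G α] {a b : α}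
    (h : Quotient.mk (orbitRel G α) b = Quotient.mk (orbitRel G α) a) : b ∈ orbit G a :=
  orbitRel_apply.mp (Quotient.exact h)

theorem sum_sh_comp_general {C : Type*} [Finite C] [AddAction (ZMod 3) C]
    (hfree : ∀ (k : ZMod 3) (c : C), k +ᵥ c = c → k = 0)
    (f g : Equiv.Perm C)
    (hf : ∀ (k : ZMod 3) (c : C), f (k +ᵥ c) = k +ᵥ f c)
    (fbar gbar : Equiv.Perm (Quotient (AddAction.orbitRel (ZMod 3) C)))
    (hfbar : ∀ c : C,
      Quotient.mk (AddAction.orbitRel (ZMod 3) C) (f c)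
        = fbar (Quotient.mk (AddAction.orbitRel (ZMod 3) C) c))
    (hgbar : ∀ c : C,
      Quotient.mk (AddAction.orbitRel (ZMod 3) C) (g c)
        = gbar (Quotient.mk (AddAction.orbitRel (ZMod 3) C) c))
    (φ : Quotient (AddAction.orbitRel (ZMod 3) C) → C)
    (hφ : ∀ q, Quotient.mk (AddAction.orbitRel (ZMod 3) C) (φ q) = q) :
    ∑ᶠ q, sh ((f * g) (φ q)) (φ ((fbar * gbar) q))
      = (∑ᶠ q, sh (f (φ q)) (φ (fbar q))) + ∑ᶠ q, sh (g (φ q)) (φ (gbar q)) := by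
  have pointwise : ∀ q, sh ((f * g) (φ q)) (φ ((fbar * gbar) q))
      = sh (g (φ q)) (φ (gbar q)) + sh (f (φ (gbar q))) (φ (fbar (gbar q))) := fun q =>
    sh_map_left_eq_add hfree hf (mem_orbit_of_mk_eq (by rw [hφ, hgbar, hφ]))
      (mem_orbit_of_mk_eq (by rw [hφ, hfbar, hφ, Equiv.Perm.mul_apply]))
  rw [finsum_congr pointwise, finsum_add_distrib (Set.toFinite _) (Set.toFinite _), add_comm,
    finsum_comp_equiv gbar (f := fun q => sh (f (φ q)) (φ (fbar q)))]

/-- Theorem 4.3(iii): the total shift is additive under composition of equivariant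
permutations: `sh (f ∘ g) = sh f + sh g` in `ZMod 3`. -/
theorem sum_sh_comp {C : Type*} [Finite C] [AddAction (ZMod 3) C]
    (hfree : ∀ (k : ZMod 3) (c : C), k +ᵥ c = c → k = 0)
    (f g : Equiv.Perm C)
    (hf : ∀ (k : ZMod 3) (c : C), f (k +ᵥ c) = k +ᵥ f c)
    (hg : ∀ (k : ZMod 3) (c : C), g (k +ᵥ c) = k +ᵥ g c)
    (fbar gbar : Equiv.Perm (Quotient (AddAction.orbitRel (ZMod 3) C)))
    (hfbar : ∀ c : C,
      Quotient.mk (AddAction.orbitRel (ZMod 3) C) (f c)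
        = fbar (Quotient.mk (AddAction.orbitRel (ZMod 3) C) c))
    (hgbar : ∀ c : C,
      Quotient.mk (AddAction.orbitRel (ZMod 3) C) (g c)
        = gbar (Quotient.mk (AddAction.orbitRel (ZMod 3) C) c))
    (φ : Quotient (AddAction.orbitRel (ZMod 3) C) → C)
    (hφ : ∀ q, Quotient.mk (AddAction.orbitRel (ZMod 3) C) (φ q) = q) :
    ∑ᶠ q, sh ((f * g) (φ q)) (φ ((fbar * gbar) q))
      = (∑ᶠ q, sh (f (φ q)) (φ (fbar q))) + ∑ᶠ q, sh (g (φ q)) (φ (gbar q)) :=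
  sum_sh_comp_general hfree f g hf fbar gbar hfbar hgbar φ hφ
end

section
/- Let C be a nonempty finite type with a free additive action of ℤ/3ℤ, let Q be the quotient of C by the orbit equivalence relation with quotient map π, and for c, c' in the same orbit let sh(c,c') be the unique k ∈ ℤ/3ℤ with k +ᵥ c = c'. For an equivariant permutation f : C ≃ C with induced permutation f̄ of Q, define sh(f) = ∑_{v ∈ Q} sh(f(φ(v)), φ(f̄(v))) for a (any) section φ : Q → C of π. Then there exists an equivariant permutation f of C with sh(f) = 1; in particular sh is a nontrivial homomorphism to ℤ/3ℤ. -/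
open scoped Classical

/-!
Rotating the corners of a single vertex `q₀` by `-1` and fixing all other corners is an
equivariant permutation inducing the identity on vertices. Its shift at every vertex
`q ≠ q₀` is `sh c c = 0`, and at `q₀` it is `sh (-1 +ᵥ c) c = 1`, so the total shift is `1`.
-/

open AddAction

section Rotation

variable {G C : Type*} [AddCommGroup G] [AddAction G C]

noncomputable def rotateOrbit (q : orbitRel.Quotient G C) (g : G) : Equiv.Perm C where
  toFun c := if (⟦c⟧ : orbitRel.Quotient G C) = q then g +ᵥ c else c
  invFun c := if (⟦c⟧ : orbitRel.Quotient G C) = q then -g +ᵥ c else c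
  left_inv c := by by_cases h : (⟦c⟧ : orbitRel.Quotient G C) = q <;> simp [h]
  right_inv c := by by_cases h : (⟦c⟧ : orbitRel.Quotient G C) = q <;> simp [h]

variable (q : orbitRel.Quotient G C) (g : G)

theorem rotateOrbit_apply_of_mk_eq {c : C} (h : (⟦c⟧ : orbitRel.Quotient G C) = q) :
    rotateOrbit q g c = g +ᵥ c :=
  if_pos h

theorem rotateOrbit_apply_of_mk_ne {c : C} (h : (⟦c⟧ : orbitRel.Quotient G C) ≠ q) :
    rotateOrbit q g c = c :=
  if_neg h

@[simp]
theorem mk_rotateOrbit (c : C) :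
    (⟦rotateOrbit q g c⟧ : orbitRel.Quotient G C) = ⟦c⟧ := by
  by_cases h : (⟦c⟧ : orbitRel.Quotient G C) = q
  · simp [rotateOrbit_apply_of_mk_eq q g h]
  · rw [rotateOrbit_apply_of_mk_ne q g h]

theorem rotateOrbit_vadd (k : G) (c : C) :
    rotateOrbit q g (k +ᵥ c) = k +ᵥ rotateOrbit q g c := by
  by_cases h : (⟦c⟧ : orbitRel.Quotient G C) = q
  · rw [rotateOrbit_apply_of_mk_eq q g h,
      rotateOrbit_apply_of_mk_eq q g (by simpa using h), vadd_comm]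
  · rw [rotateOrbit_apply_of_mk_ne q g h, rotateOrbit_apply_of_mk_ne q g (by simpa using h)]

theorem eq_of_mk_rotateOrbit_eq {fbar : Equiv.Perm (orbitRel.Quotient G C)}
    (hfbar : ∀ c : C, (⟦rotateOrbit q g c⟧ : orbitRel.Quotient G C) = fbar ⟦c⟧)
    (p : orbitRel.Quotient G C) : fbar p = p := by
  induction p using Quotient.ind with
  | _ c => rw [← hfbar c, mk_rotateOrbit]

end Rotation

section Shift

variable {C : Type*} [AddAction (ZMod 3) C]

theorem sh_vadd (hfree : ∀ (k : ZMod 3) (c : C), k +ᵥ c = c → k = 0) (c : C) (k : ZMod 3) :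
    sh c (k +ᵥ c) = k := by
  have h : ∃ m : ZMod 3, m +ᵥ c = k +ᵥ c := ⟨k, rfl⟩
  rw [sh, dif_pos h]
  have hdiff : (h.choose - k) +ᵥ c = c := by
    rw [sub_eq_add_neg, add_comm, add_vadd, h.choose_spec, neg_vadd_vadd]
  exact sub_eq_zero.mp (hfree _ _ hdiff)

theorem sh_self (hfree : ∀ (k : ZMod 3) (c : C), k +ᵥ c = c → k = 0) (c : C) :
    sh c c = 0 := by
  simpa using sh_vadd hfree c 0

theorem sh_rotateOrbit_neg_one (hfree : ∀ (k : ZMod 3) (c : C), k +ᵥ c = c → k = 0)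
    (q : orbitRel.Quotient (ZMod 3) C) (c : C) :
    sh (rotateOrbit q (-1) c) c = if (⟦c⟧ : orbitRel.Quotient (ZMod 3) C) = q then 1 else 0 := by
  by_cases h : (⟦c⟧ : orbitRel.Quotient (ZMod 3) C) = q
  · rw [rotateOrbit_apply_of_mk_eq q _ h, if_pos h]
    simpa using sh_vadd hfree ((-1 : ZMod 3) +ᵥ c) 1
  · rw [rotateOrbit_apply_of_mk_ne q _ h, if_neg h, sh_self hfree]

end Shift

theorem exists_equivariant_sum_sh_eq_one_general
    {C : Type*} [Nonempty C] [AddAction (ZMod 3) C]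
    (hfree : ∀ (k : ZMod 3) (c : C), k +ᵥ c = c → k = 0) :
    ∃ f : Equiv.Perm C,
      (∀ (k : ZMod 3) (c : C), f (k +ᵥ c) = k +ᵥ f c) ∧
      ∀ fbar : Equiv.Perm (Quotient (AddAction.orbitRel (ZMod 3) C)),
        (∀ c : C,
          Quotient.mk (AddAction.orbitRel (ZMod 3) C) (f c)
            = fbar (Quotient.mk (AddAction.orbitRel (ZMod 3) C) c)) →
        ∀ φ : Quotient (AddAction.orbitRel (ZMod 3) C) → C,
          (∀ q, Quotient.mk (AddAction.orbitRel (ZMod 3) C) (φ q) = q) →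
          ∑ᶠ q, sh (f (φ q)) (φ (fbar q)) = 1 := by
  obtain ⟨c₀⟩ := ‹Nonempty C›
  set q₀ : orbitRel.Quotient (ZMod 3) C := ⟦c₀⟧
  refine ⟨rotateOrbit q₀ (-1), rotateOrbit_vadd q₀ (-1), fun fbar hfbar φ hφ => ?_⟩
  have hshift (q) : sh (rotateOrbit q₀ (-1) (φ q)) (φ (fbar q)) = if q = q₀ then 1 else 0 := by
    rw [eq_of_mk_rotateOrbit_eq q₀ (-1) hfbar, sh_rotateOrbit_neg_one hfree, hφ]
  rw [finsum_eq_single _ q₀ fun q hq => by rw [hshift, if_neg hq], hshift, if_pos rfl]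

/-- Theorem 4.3(iv): on a nonempty `C`, there exists an equivariant permutation `f`
with total shift `sh f = 1`; in particular `sh` is nontrivial. -/
theorem exists_equivariant_sum_sh_eq_one
    {C : Type*} [Finite C] [Nonempty C] [AddAction (ZMod 3) C]
    (hfree : ∀ (k : ZMod 3) (c : C), k +ᵥ c = c → k = 0) :
    ∃ f : Equiv.Perm C,
      (∀ (k : ZMod 3) (c : C), f (k +ᵥ c) = k +ᵥ f c) ∧
      ∀ fbar : Equiv.Perm (Quotient (AddAction.orbitRel (ZMod 3) C)),
        (∀ c : C,
          Quotient.mk (AddAction.orbitRel (ZMod 3) C) (f c)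
            = fbar (Quotient.mk (AddAction.orbitRel (ZMod 3) C) c)) →
        ∀ φ : Quotient (AddAction.orbitRel (ZMod 3) C) → C,
          (∀ q, Quotient.mk (AddAction.orbitRel (ZMod 3) C) (φ q) = q) →
          ∑ᶠ q, sh (f (φ q)) (φ (fbar q)) = 1 :=
  exists_equivariant_sum_sh_eq_one_general hfree
end
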